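/- Assume condition (2.2) holds. Let δ_h : [0,T] → ℝ^{m+2} be continuous, written δ_h(t) = (δ_h^L(t), δ_h^R(t)) with δ_h^L(t) ∈ ℝ^m and δ_h^R(t) ∈ ℝ², and let ε_h : [0,T] → ℝ^{m+2} satisfy ε_h'(t) = M ε_h(t) + δ_h(t) with ε_h(0) = 0. Then for every t ∈ (0,T], |ε_h(t)|_∞ ≤ t · max_{0≤ϑ≤t} { |δ_h^L(ϑ)|_∞ + (8S/h)·|δ_h^R(ϑ)|_∞ }. -/

import Mathlib

/-- Tridiagonal matrix with diagonal `α`, subdiagonal `β` and superdiagonal `γ`. -/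
def tridiag {m : ℕ} (α β γ : Fin m → ℝ) : Matrix (Fin m) (Fin m) ℝ :=
  Matrix.of fun i j =>
    if (i : ℕ) = j then α i
    else if (i : ℕ) = (j : ℕ) + 1 then β i
    else if (j : ℕ) = (i : ℕ) + 1 then γ i
    else 0

/-- The `(m+1)×2` matrix whose only nonzero entry is `g` in the bottom-left position. -/
def Bmat {m : ℕ} (g : ℝ) : Matrix (Fin (m + 1)) (Fin 2) ℝ :=
  Matrix.of fun i j => if i = Fin.last m ∧ j = 0 then g else 0

/-- The `2×2` matrix both of whose rows equal `(−rS/h, r·s_{m+1}/h)`. -/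
noncomputable def Cmat (r spen S h : ℝ) : Matrix (Fin 2) (Fin 2) ℝ :=
  Matrix.of fun _ j => if j = 0 then -(r * S) / h else r * spen / h

/-- The logarithmic maximum norm `μ_∞[X] = max_i ( x_{ii} + Σ_{j≠i} |x_{ij}| )`. -/
noncomputable def logMaxNorm {ι : Type*} [Fintype ι] [DecidableEq ι]
    (X : Matrix ι ι ℝ) : ℝ :=
  ⨆ i, (X i i + ∑ j ∈ Finset.univ.erase i, |X i j|)

/-- The maximum norm of a real vector: `|v|_∞ = max_i |v i|`. -/
noncomputable def vecMaxNorm {ι : Type*} [Fintype ι] (v : ι → ℝ) : ℝ :=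
  ⨆ i, |v i|


/-!
The right block is decoupled from the left one and, since both rows of `C` are equal, it
only sees the combination `w = s_{m+1} ε_{m+2} - S ε_{m+1}`, which solves `w' = -r w + g`
with `|g| ≤ 2S |δ^R|_∞`. Hence `|w| ≤ 2S |δ^R|_∞ / r` and `|(ε^R)'|_∞ ≤ (2S/h + 1) |δ^R|_∞`.
On the left block, condition (2.2) makes every row of `[A B]` have logarithmic row sum
`≤ -r ≤ 0`, so `|ε + τ ε'|_∞ ≤ |ε|_∞ + τ K` for small `τ > 0`, `K` being the maximum in the
bound. A Grönwall argument for this one-sided estimate on the right Dini derivative of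
`|ε|_∞` gives `|ε(t)|_∞ ≤ t K`.
-/

open Filter Topology Set Matrix

section OneSidedGronwall

variable {E : Type*} [NormedAddCommGroup E] [NormedSpace ℝ E]

theorem HasDerivWithinAt.frequently_slope_norm_lt {f : ℝ → E} {f' : E} {x β ρ : ℝ}
    (hf : HasDerivWithinAt f f' (Ici x) x)
    (hβ : ∀ᶠ τ in 𝓝[>] 0, ‖f x + τ • f'‖ ≤ ‖f x‖ + τ * β) (hρ : β < ρ) :
    ∃ᶠ z in 𝓝[>] x, slope (fun y => ‖f y‖) x z < ρ := by
  have hslope : Tendsto (slope f x) (𝓝[>] x) (𝓝 f') :=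
    (hasDerivWithinAt_iff_tendsto_slope' (lt_irrefl x)).1 (hf.mono Ioi_subset_Ici_self)
  have hshift : Tendsto (fun z => z - x) (𝓝[>] x) (𝓝[>] 0) :=
    tendsto_nhdsWithin_of_tendsto_nhds_of_eventually_within _
      (((continuous_sub_right x).tendsto' x 0 (sub_self x)).mono_left nhdsWithin_le_nhds)
      (eventually_nhdsWithin_of_forall fun _ hz => mem_Ioi.2 (sub_pos.2 hz))
  have hη : 0 < (ρ - β) / 2 := by linarith
  refine Eventually.frequently ?_
  filter_upwards [hslope.eventually (Metric.ball_mem_nhds _ hη), hshift.eventually hβ,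
    self_mem_nhdsWithin] with z hz hzβ hxz
  have hzx : 0 < z - x := sub_pos.2 hxz
  rw [dist_eq_norm] at hz
  have hfz : f z = (f x + (z - x) • f') + (z - x) • (slope f x z - f') := by
    rw [smul_sub, sub_smul_slope, vsub_eq_sub]; abel
  have hnorm : ‖f z‖ ≤ ‖f x‖ + (z - x) * (β + (ρ - β) / 2) :=
    calc ‖f z‖ ≤ ‖f x + (z - x) • f'‖ + ‖(z - x) • (slope f x z - f')‖ := hfz ▸ norm_add_le _ _
      _ = ‖f x + (z - x) • f'‖ + (z - x) * ‖slope f x z - f'‖ := by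
          rw [norm_smul, Real.norm_of_nonneg hzx.le]
      _ ≤ ‖f x‖ + (z - x) * β + (z - x) * ((ρ - β) / 2) := by gcongr
      _ = _ := by ring
  rw [slope_def_field, div_lt_iff₀ hzx]
  nlinarith

theorem norm_le_gronwallBound_of_norm_add_smul_deriv_le {f f' : ℝ → E} {δ K ε a b : ℝ}
    (hf : ContinuousOn f (Icc a b))
    (hf' : ∀ x ∈ Ico a b, HasDerivWithinAt f (f' x) (Ici x) x) (ha : ‖f a‖ ≤ δ)
    (bound : ∀ x ∈ Ico a b,
      ∀ᶠ τ in 𝓝[>] 0, ‖f x + τ • f' x‖ ≤ ‖f x‖ + τ * (K * ‖f x‖ + ε)) :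
    ∀ x ∈ Icc a b, ‖f x‖ ≤ gronwallBound δ K ε (x - a) :=
  le_gronwallBound_of_liminf_deriv_right_le hf.norm
    (fun x hx _ hρ => (hf' x hx).frequently_slope_norm_lt (bound x hx) hρ) ha
    fun _ _ => le_rfl

theorem norm_le_div_of_hasDerivWithinAt_neg_smul_add {f g : ℝ → E} {a b r G : ℝ} (hr : 0 < r)
    (hf : ContinuousOn f (Icc a b))
    (hf' : ∀ x ∈ Ico a b, HasDerivWithinAt f (-r • f x + g x) (Ici x) x)
    (hg : ∀ x ∈ Ico a b, ‖g x‖ ≤ G) (ha : ‖f a‖ ≤ G / r) :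
    ∀ x ∈ Icc a b, ‖f x‖ ≤ G / r := by
  have hstat : ∀ s, gronwallBound (G / r) (-r) G s = G / r := fun s => by
    rw [gronwallBound_of_K_ne_0 (neg_ne_zero.2 hr.ne')]; field_simp; ring
  intro x hx
  rw [← hstat (x - a)]
  refine norm_le_gronwallBound_of_norm_add_smul_deriv_le hf hf' ha (fun x hx => ?_) x hx
  filter_upwards [Ioo_mem_nhdsGT (one_div_pos.2 hr)] with τ hτ
  have hτr : 0 ≤ 1 - τ * r := by linarith [(lt_div_iff₀ hr).1 hτ.2]
  calc ‖f x + τ • (-r • f x + g x)‖ = ‖(1 - τ * r) • f x + τ • g x‖ := by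
        congr 1; module
    _ ≤ (1 - τ * r) * ‖f x‖ + τ * G := by
        refine (norm_add_le _ _).trans (add_le_add ?_ ?_)
        · rw [norm_smul, Real.norm_of_nonneg hτr]
        · rw [norm_smul, Real.norm_of_nonneg hτ.1.le]
          exact mul_le_mul_of_nonneg_left (hg x hx) hτ.1.le
    _ = ‖f x‖ + τ * (-r * ‖f x‖ + G) := by ring

end OneSidedGronwall

theorem IsCompact.le_ciSup_of_continuousOn {α : Type*} [TopologicalSpace α] {s : Set α}
    {f : α → ℝ} (hs : IsCompact s) (hf : ContinuousOn f s) {x : α} (hx : x ∈ s) :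
    f x ≤ ⨆ y : s, f y :=
  le_ciSup (f := fun y : s => f y) (image_eq_range f s ▸ hs.bddAbove_image hf) ⟨x, hx⟩

section LogarithmicNorm

open Finset

theorem vecMaxNorm_eq_norm {ι : Type*} [Fintype ι] (v : ι → ℝ) : vecMaxNorm v = ‖v‖ := by
  unfold vecMaxNorm
  refine le_antisymm (Real.iSup_le (fun i => by simpa using norm_le_pi_norm v i) (norm_nonneg v)) ?_
  refine (pi_norm_le_iff_of_nonneg (Real.iSup_nonneg fun i => abs_nonneg (v i))).2 fun i => ?_
  exact (Real.norm_eq_abs _).trans_le (le_ciSup (f := fun i => |v i|) (Finite.bddAbove_range _) i)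

theorem le_logMaxNorm {ι : Type*} [Fintype ι] [DecidableEq ι] (X : Matrix ι ι ℝ) (i : ι) :
    X i i + ∑ j ∈ univ.erase i, |X i j| ≤ logMaxNorm X :=
  le_ciSup (f := fun i => X i i + ∑ j ∈ univ.erase i, |X i j|) (Finite.bddAbove_range _) i

theorem le_logMaxNorm_smul_one_add {ι : Type*} [Fintype ι] [DecidableEq ι] (r : ℝ)
    (X : Matrix ι ι ℝ) (i : ι) :
    r + (X i i + ∑ j ∈ univ.erase i, |X i j|) ≤ logMaxNorm (r • 1 + X) := by
  convert le_logMaxNorm (r • 1 + X) i using 1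
  rw [Matrix.add_apply, Matrix.smul_apply, one_apply_eq, smul_eq_mul, mul_one, add_assoc]
  congr 2
  refine sum_congr rfl fun j hj => ?_
  rw [Matrix.add_apply, Matrix.smul_apply, one_apply_ne (ne_of_mem_erase hj).symm, smul_zero,
    zero_add]

theorem abs_add_smul_mulVec_apply_le {ι : Type*} [Fintype ι] [DecidableEq ι]
    (M : Matrix ι ι ℝ) (v : ι → ℝ) (i : ι) {τ : ℝ} (hτ : 0 ≤ τ) (hdiag : 0 ≤ 1 + τ * M i i) :
    |v i + τ * (M *ᵥ v) i| ≤ (1 + τ * (M i i + ∑ j ∈ univ.erase i, |M i j|)) * ‖v‖ := by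
  have hsplit : v i + τ * (M *ᵥ v) i
      = (1 + τ * M i i) * v i + τ * ∑ j ∈ univ.erase i, M i j * v j := by
    rw [mulVec, dotProduct, ← add_sum_erase _ _ (mem_univ i)]; ring
  have hv : ∀ j, |v j| ≤ ‖v‖ := fun j => by simpa using norm_le_pi_norm v j
  rw [hsplit]
  calc _ ≤ (1 + τ * M i i) * |v i| + τ * ∑ j ∈ univ.erase i, |M i j| * |v j| := by
        refine (abs_add_le _ _).trans (add_le_add ?_ ?_)
        · rw [abs_mul, abs_of_nonneg hdiag]
        · rw [abs_mul, abs_of_nonneg hτ]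
          gcongr
          exact (abs_sum_le_sum_abs _ _).trans_eq (by simp_rw [abs_mul])
    _ ≤ (1 + τ * M i i) * ‖v‖ + τ * ∑ j ∈ univ.erase i, |M i j| * ‖v‖ := by
        gcongr with j
        exacts [hv i, hv j]
    _ = _ := by rw [← sum_mul]; ring

theorem eventually_abs_add_smul_mulVec_add_apply_le {ι : Type*} [Fintype ι] [DecidableEq ι]
    {M : Matrix ι ι ℝ} {v d : ι → ℝ} {i : ι} {K : ℝ}
    (hrow : M i i + ∑ j ∈ univ.erase i, |M i j| ≤ 0) (hd : |d i| ≤ K) :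
    ∀ᶠ τ in 𝓝[>] 0, |v i + τ * (M *ᵥ v + d) i| ≤ ‖v‖ + τ * K := by
  have hdiag : ∀ᶠ τ in 𝓝 (0 : ℝ), 0 < 1 + τ * M i i :=
    continuousAt_const.eventually_lt (by fun_prop) (by simp)
  filter_upwards [hdiag.filter_mono nhdsWithin_le_nhds, self_mem_nhdsWithin] with τ hτM hτpos
  have hτ : 0 ≤ τ := le_of_lt hτpos
  calc |v i + τ * (M *ᵥ v + d) i| ≤ |v i + τ * (M *ᵥ v) i| + τ * |d i| := by
        rw [Pi.add_apply, mul_add, ← add_assoc]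
        refine (abs_add_le _ _).trans_eq ?_
        rw [abs_mul, abs_of_nonneg hτ]
    _ ≤ (1 + τ * (M i i + ∑ j ∈ univ.erase i, |M i j|)) * ‖v‖ + τ * K :=
        add_le_add (abs_add_smul_mulVec_apply_le M v i hτ hτM.le) (by gcongr)
    _ ≤ ‖v‖ + τ * K := by nlinarith [norm_nonneg v, mul_nonneg hτ (norm_nonneg v)]

theorem eventually_norm_add_smul_mulVec_add_le {n o : Type*} [Fintype n] [Fintype o]
    [DecidableEq n] [DecidableEq o] {M : Matrix (n ⊕ o) (n ⊕ o) ℝ} {v d : n ⊕ o → ℝ} {K : ℝ}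
    (hK : 0 ≤ K) (hrow : ∀ j, M (.inl j) (.inl j) + ∑ p ∈ univ.erase (.inl j), |M (.inl j) p| ≤ 0)
    (hd : ∀ j, |d (.inl j)| ≤ K) (hderiv : ∀ k, |(M *ᵥ v + d) (.inr k)| ≤ K) :
    ∀ᶠ τ in 𝓝[>] 0, ‖v + τ • (M *ᵥ v + d)‖ ≤ ‖v‖ + τ * K := by
  have hcoord : ∀ i, ∀ᶠ τ in 𝓝[>] 0, |v i + τ * (M *ᵥ v + d) i| ≤ ‖v‖ + τ * K := by
    rintro (j | k)
    · exact eventually_abs_add_smul_mulVec_add_apply_le (hrow j) (hd j)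
    · filter_upwards [self_mem_nhdsWithin] with τ hτ
      refine (abs_add_le _ _).trans (add_le_add (by simpa using norm_le_pi_norm v _) ?_)
      rw [abs_mul, abs_of_pos hτ]
      exact mul_le_mul_of_nonneg_left (hderiv k) (le_of_lt hτ)
  filter_upwards [eventually_all.2 hcoord, self_mem_nhdsWithin] with τ hτ (hτpos : 0 < τ)
  exact (pi_norm_le_iff_of_nonneg (by positivity)).2 fun i => by simpa [mul_add] using hτ i

theorem sum_univ_erase_inl {α β M : Type*} [Fintype α] [Fintype β] [DecidableEq α] [DecidableEq β]
    [AddCommGroup M] (f : α ⊕ β → M) (a : α) :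
    ∑ p ∈ univ.erase (.inl a), f p = ∑ i ∈ univ.erase a, f (.inl i) + ∑ k, f (.inr k) := by
  rw [sum_erase_eq_sub (mem_univ _), sum_erase_eq_sub (mem_univ _), Fintype.sum_sum_type]
  abel

theorem fromBlocks_inl_row_eq {n o : Type*} [Fintype n] [Fintype o] [DecidableEq n]
    [DecidableEq o] (A : Matrix n n ℝ) (B : Matrix n o ℝ) (C : Matrix o n ℝ) (D : Matrix o o ℝ)
    (j : n) :
    fromBlocks A B C D (.inl j) (.inl j)
        + ∑ p ∈ univ.erase (.inl j), |fromBlocks A B C D (.inl j) p|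
      = A j j + ∑ p ∈ univ.erase j, |A j p| + ∑ k, |B j k| := by
  rw [sum_univ_erase_inl]
  simp only [fromBlocks_apply₁₁, fromBlocks_apply₁₂]
  ring

theorem sum_abs_Bmat_row {m : ℕ} (g : ℝ) (j : Fin (m + 1)) :
    ∑ k, |Bmat g j k| = if j = Fin.last m then |g| else 0 := by
  by_cases hj : j = Fin.last m <;> simp [Bmat, Fin.sum_univ_two, hj]

theorem sum_abs_tridiag_last_row_le {m : ℕ} (α β γ : Fin (m + 1) → ℝ) :
    ∑ p ∈ univ.erase (Fin.last m), |tridiag α β γ (Fin.last m) p| ≤ |β (Fin.last m)| := by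
  cases m with
  | zero => simp
  | succ k =>
    rw [sum_eq_single_of_mem (Fin.last k).castSucc (by simp [Fin.ext_iff])]
    · simp [tridiag]
    · intro p hp hpk
      have h1 : (p : ℕ) ≠ k + 1 := fun h => (ne_of_mem_erase hp) (Fin.ext h)
      have h2 : (p : ℕ) ≠ k := fun h => hpk (Fin.ext h)
      simp [tridiag, Ne.symm h1, Ne.symm h2, show (p : ℕ) ≠ k + 1 + 1 by omega]

theorem fromBlocks_tridiag_Bmat_inl_row_le {m : ℕ} {r : ℝ} {α β γ : Fin (m + 1) → ℝ}
    (C : Matrix (Fin 2) (Fin (m + 1)) ℝ) (D : Matrix (Fin 2) (Fin 2) ℝ)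
    (hmu : logMaxNorm (r • (1 : Matrix (Fin (m + 1)) (Fin (m + 1)) ℝ) + tridiag α β γ) ≤ 0)
    (hrow : r + α (Fin.last m) + |β (Fin.last m)| + |γ (Fin.last m)| ≤ 0) (j : Fin (m + 1)) :
    fromBlocks (tridiag α β γ) (Bmat (γ (Fin.last m))) C D (.inl j) (.inl j)
      + ∑ p ∈ univ.erase (.inl j),
          |fromBlocks (tridiag α β γ) (Bmat (γ (Fin.last m))) C D (.inl j) p|
      ≤ -r := by
  rw [fromBlocks_inl_row_eq, sum_abs_Bmat_row]
  split_ifs with hj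
  · subst hj
    have hdiag : tridiag α β γ (Fin.last m) (Fin.last m) = α (Fin.last m) := by simp [tridiag]
    linarith [sum_abs_tridiag_last_row_le α β γ]
  · linarith [le_logMaxNorm_smul_one_add r (tridiag α β γ) j]

end LogarithmicNorm

theorem fromBlocks_Cmat_mulVec_inr {n : Type*} [Fintype n] (A : Matrix n n ℝ)
    (B : Matrix n (Fin 2) ℝ) (r s S h : ℝ) (v : n ⊕ Fin 2 → ℝ) (k : Fin 2) :
    (fromBlocks A B 0 (Cmat r s S h) *ᵥ v) (.inr k)
      = r / h * (s * v (.inr 1) - S * v (.inr 0)) := by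
  simp [mulVec, dotProduct, Fintype.sum_sum_type, Fin.sum_univ_two, Cmat]
  ring

theorem abs_deriv_inr_le {n : Type*} [Fintype n] {r s S t D : ℝ} (hr : 0 < r) (hs : 0 < s)
    (hsS : s < S) {A : Matrix n n ℝ} {B : Matrix n (Fin 2) ℝ} {ε δ : ℝ → n ⊕ Fin 2 → ℝ}
    (hε0 : ε 0 = 0)
    (hε : ∀ x ∈ Icc 0 t, HasDerivAt ε (fromBlocks A B 0 (Cmat r s S (S - s)) *ᵥ ε x + δ x) x)
    (hδ : ∀ x ∈ Icc 0 t, ∀ k, |δ x (.inr k)| ≤ D) :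
    ∀ x ∈ Icc 0 t, ∀ k, |(fromBlocks A B 0 (Cmat r s S (S - s)) *ᵥ ε x + δ x) (.inr k)|
      ≤ (2 * S / (S - s) + 1) * D := by
  intro x hx k
  have hD : 0 ≤ D := (abs_nonneg _).trans (hδ 0 ⟨le_rfl, hx.1.trans hx.2⟩ 0)
  have hh : 0 < S - s := sub_pos.2 hsS
  have hS : 0 < S := hs.trans hsS
  set w : ℝ → ℝ := fun y => s * ε y (.inr 1) - S * ε y (.inr 0) with hw
  set g : ℝ → ℝ := fun y => s * δ y (.inr 1) - S * δ y (.inr 0) with hg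
  have hMw : ∀ y k, (fromBlocks A B 0 (Cmat r s S (S - s)) *ᵥ ε y) (.inr k) = r / (S - s) * w y :=
    fun y k => fromBlocks_Cmat_mulVec_inr A B r s S (S - s) (ε y) k
  have hw' : ∀ y ∈ Icc 0 t, HasDerivAt w (-r * w y + g y) y := by
    intro y hy
    have hcomp := fun k => hasDerivAt_pi.1 (hε y hy) (.inr k)
    refine (((hcomp 1).const_mul s).sub ((hcomp 0).const_mul S)).congr_deriv ?_
    simp only [Pi.add_apply, hMw, hg]
    field_simp
    ring
  have hgG : ∀ y ∈ Ico 0 t, ‖g y‖ ≤ 2 * S * D := by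
    intro y hy
    have h0 := hδ y (Ico_subset_Icc_self hy) 0
    have h1 := hδ y (Ico_subset_Icc_self hy) 1
    rw [Real.norm_eq_abs]
    calc |g y| ≤ s * |δ y (.inr 1)| + S * |δ y (.inr 0)| := by
          refine (abs_sub _ _).trans_eq ?_
          rw [abs_mul, abs_mul, abs_of_pos hs, abs_of_pos hS]
      _ ≤ 2 * S * D := by nlinarith
  have hwx : |w x| ≤ 2 * S * D / r :=
    norm_le_div_of_hasDerivWithinAt_neg_smul_add hr
      (fun y hy => (hw' y hy).continuousAt.continuousWithinAt)
      (fun y hy => (hw' y (Ico_subset_Icc_self hy)).hasDerivWithinAt) hgG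
      (by simp [hw, hε0]; positivity) x hx
  calc |(fromBlocks A B 0 (Cmat r s S (S - s)) *ᵥ ε x + δ x) (.inr k)|
      = |r / (S - s) * w x + δ x (.inr k)| := by rw [Pi.add_apply, hMw]
    _ ≤ r / (S - s) * (2 * S * D / r) + D := by
        refine (abs_add_le _ _).trans (add_le_add ?_ (hδ x hx k))
        rw [abs_mul, abs_of_pos (div_pos hr hh)]
        gcongr
    _ = _ := by field_simp

theorem vecMaxNorm_inl_add_le_iSup {n o : Type*} [Fintype n] [Fintype o] {δ : ℝ → n ⊕ o → ℝ}
    {a b : ℝ} (c : ℝ) (hδ : ContinuousOn δ (Icc a b)) {x : ℝ} (hx : x ∈ Icc a b) :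
    vecMaxNorm (fun i => δ x (.inl i)) + c * vecMaxNorm (fun i => δ x (.inr i))
      ≤ ⨆ ϑ : Icc a b,
        (vecMaxNorm (fun i => δ ϑ (.inl i)) + c * vecMaxNorm (fun i => δ ϑ (.inr i))) := by
  refine isCompact_Icc.le_ciSup_of_continuousOn
    (f := fun x => vecMaxNorm (fun i => δ x (.inl i)) + c * vecMaxNorm (fun i => δ x (.inr i)))
    ?_ hx
  simp only [vecMaxNorm_eq_norm]
  fun_prop

theorem abs_inl_le_and_mul_abs_inr_le {n o : Type*} [Fintype n] [Fintype o] {v : n ⊕ o → ℝ}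
    {c K : ℝ} (hc : 0 ≤ c)
    (h : vecMaxNorm (fun i => v (.inl i)) + c * vecMaxNorm (fun i => v (.inr i)) ≤ K) :
    (∀ j, |v (.inl j)| ≤ K) ∧ ∀ k, c * |v (.inr k)| ≤ K := by
  simp only [vecMaxNorm_eq_norm] at h
  have hL : ∀ j, |v (.inl j)| ≤ ‖fun i => v (.inl i)‖ := fun j => by
    simpa using norm_le_pi_norm (fun i => v (.inl i)) j
  have hR : ∀ k, |v (.inr k)| ≤ ‖fun i => v (.inr i)‖ := fun k => by
    simpa using norm_le_pi_norm (fun i => v (.inr i)) k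
  refine ⟨fun j => ?_, fun k => ?_⟩
  · nlinarith [hL j, norm_nonneg fun i => v (.inr i)]
  · nlinarith [hR k, norm_nonneg fun i => v (.inl i)]

theorem statement12_general (m : ℕ) (r spen S T : ℝ) (hr : 0 < r)
    (hspen : 0 < spen) (hsS : spen < S)
    (α β γ : Fin (m + 1) → ℝ)
    (A : Matrix (Fin (m + 1)) (Fin (m + 1)) ℝ) (hA : A = tridiag α β γ)
    (B : Matrix (Fin (m + 1)) (Fin 2) ℝ) (hB : B = Bmat (γ (Fin.last m)))
    (C : Matrix (Fin 2) (Fin 2) ℝ) (hC : C = Cmat r spen S (S - spen))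
    (M : Matrix (Fin (m + 1) ⊕ Fin 2) (Fin (m + 1) ⊕ Fin 2) ℝ)
    (hM : M = Matrix.fromBlocks A B 0 C)
    (hmu : logMaxNorm (r • (1 : Matrix (Fin (m + 1)) (Fin (m + 1)) ℝ) + A) ≤ 0)
    (hrow : r + α (Fin.last m) + |β (Fin.last m)| + |γ (Fin.last m)| ≤ 0)
    (δ : ℝ → (Fin (m + 1) ⊕ Fin 2) → ℝ)
    (hδcont : ContinuousOn δ (Set.Icc 0 T))
    (ε : ℝ → (Fin (m + 1) ⊕ Fin 2) → ℝ)
    (hε0 : ε 0 = 0)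
    (hεderiv : ∀ t ∈ Set.Icc (0:ℝ) T, HasDerivAt ε (M.mulVec (ε t) + δ t) t) :
    ∀ t : ℝ, 0 < t → t ≤ T →
      vecMaxNorm (ε t) ≤ t * ⨆ ϑ : Set.Icc (0:ℝ) t,
        (vecMaxNorm (fun i => δ ϑ (Sum.inl i)) +
          (8 * S / (S - spen)) * vecMaxNorm (fun i => δ ϑ (Sum.inr i))) := by
  intro t ht htT
  subst hA hB hC hM
  have hε : ∀ x ∈ Icc 0 t, HasDerivAt ε _ x := fun x hx => hεderiv x (Icc_subset_Icc_right htT hx)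
  have hh : 0 < S - spen := sub_pos.2 hsS
  have hc : 0 < 8 * S / (S - spen) := by have := hspen.trans hsS; positivity
  set K := ⨆ ϑ : Icc (0:ℝ) t, (vecMaxNorm (fun i => δ ϑ (.inl i)) +
    8 * S / (S - spen) * vecMaxNorm (fun i => δ ϑ (.inr i)))
  have hδK := fun (x : ℝ) (hx : x ∈ Icc 0 t) => abs_inl_le_and_mul_abs_inr_le hc.le
    (vecMaxNorm_inl_add_le_iSup _ (hδcont.mono (Icc_subset_Icc_right htT)) hx)
  have hK0 : 0 ≤ K := (abs_nonneg _).trans ((hδK 0 ⟨le_rfl, ht.le⟩).1 0)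
  have hderivR : ∀ x ∈ Icc 0 t, ∀ k, |(fromBlocks (tridiag α β γ) (Bmat (γ (Fin.last m))) 0
      (Cmat r spen S (S - spen)) *ᵥ ε x + δ x) (.inr k)| ≤ K := fun x hx k =>
    calc _ ≤ (2 * S / (S - spen) + 1) * (K / (8 * S / (S - spen))) :=
          abs_deriv_inr_le hr hspen hsS hε0 hε
            (fun x hx k => (le_div_iff₀' hc).2 ((hδK x hx).2 k)) x hx k
      _ = (3 * S - spen) / (8 * S) * K := by field_simp; ring
      _ ≤ K := mul_le_of_le_one_left hK0 ((div_le_one (by linarith)).2 (by linarith))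
  have hbound := norm_le_gronwallBound_of_norm_add_smul_deriv_le (δ := 0) (K := 0) (ε := K)
    (fun x hx => (hε x hx).continuousAt.continuousWithinAt)
    (fun x hx => (hε x (Ico_subset_Icc_self hx)).hasDerivWithinAt) (by simp [hε0])
    (fun x hx => by
      simpa only [zero_mul, zero_add] using eventually_norm_add_smul_mulVec_add_le hK0
        (fun j => (fromBlocks_tridiag_Bmat_inl_row_le _ _ hmu hrow j).trans (by linarith))
        ((hδK x (Ico_subset_Icc_self hx)).1) (hderivR x (Ico_subset_Icc_self hx)))
    t ⟨ht.le, le_rfl⟩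
  simpa [vecMaxNorm_eq_norm, gronwallBound_K0, mul_comm] using hbound

/-- Assume condition (2.2) holds.  Let `δ_h : [0,T] → ℝ^{m+2}` be continuous, split as
`(δ_h^L, δ_h^R) ∈ ℝ^m × ℝ²`, and let `ε_h` satisfy `ε_h'(t) = M ε_h(t) + δ_h(t)`,
`ε_h(0) = 0`.  Then for every `t ∈ (0,T]`,
`|ε_h(t)|_∞ ≤ t · max_{0≤ϑ≤t} { |δ_h^L(ϑ)|_∞ + (8S/h)·|δ_h^R(ϑ)|_∞ }`. -/
theorem statement12 (m : ℕ) (r spen S T : ℝ) (hr : 0 < r) (hT : 0 < T)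
    (hspen : 0 < spen) (hsS : spen < S)
    (α β γ : Fin (m + 1) → ℝ) (hconv : m = 0 → β 0 = 0)
    (A : Matrix (Fin (m + 1)) (Fin (m + 1)) ℝ) (hA : A = tridiag α β γ)
    (B : Matrix (Fin (m + 1)) (Fin 2) ℝ) (hB : B = Bmat (γ (Fin.last m)))
    (C : Matrix (Fin 2) (Fin 2) ℝ) (hC : C = Cmat r spen S (S - spen))
    (M : Matrix (Fin (m + 1) ⊕ Fin 2) (Fin (m + 1) ⊕ Fin 2) ℝ)
    (hM : M = Matrix.fromBlocks A B 0 C)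
    (hinv : IsUnit (r • (1 : Matrix (Fin (m + 1)) (Fin (m + 1)) ℝ) + A).det)
    (hmu : logMaxNorm (r • (1 : Matrix (Fin (m + 1)) (Fin (m + 1)) ℝ) + A) ≤ 0)
    (hrow : r + α (Fin.last m) + |β (Fin.last m)| + |γ (Fin.last m)| ≤ 0)
    (δ : ℝ → (Fin (m + 1) ⊕ Fin 2) → ℝ)
    (hδcont : ContinuousOn δ (Set.Icc 0 T))
    (ε : ℝ → (Fin (m + 1) ⊕ Fin 2) → ℝ)
    (hε0 : ε 0 = 0)
    (hεderiv : ∀ t ∈ Set.Icc (0:ℝ) T, HasDerivAt ε (M.mulVec (ε t) + δ t) t) :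
    ∀ t : ℝ, 0 < t → t ≤ T →
      vecMaxNorm (ε t) ≤ t * ⨆ ϑ : Set.Icc (0:ℝ) t,
        (vecMaxNorm (fun i => δ ϑ (Sum.inl i)) +
          (8 * S / (S - spen)) * vecMaxNorm (fun i => δ ϑ (Sum.inr i))) :=
  statement12_general m r spen S T hr hspen hsS α β γ A hA B hB C hC M hM hmu hrow δ hδcont ε hε0
    hεderiv
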